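/- arXiv:2604.20287 — 2 statements merged into one kernel-verified Lean document; each statement's English description precedes it below -/
import Mathlib

section
/- Let r_{n−1} = r_n/2 > 0, i ∈ {1,2}, R_i a rotation matrix, b_i ∈ ℝ², τε > 0. The affine interpolation on the triangle with vertices p1 = ((−1)^{i+1} r_{n−1}, −r_{n−1}), p2 = ((−1)^{i+1} r_n, −r_n), p3 = ((−1)^{i+1} r_n, r_n) and values v1 = R_i p1 + (−1)^{i+1}(k+1) τε b_i, v2 = R_i p2 + (−1)^{i+1}(k+1) τε b_i, v3 = R_i p3 + (−1)^{i+1} k τε b_i has gradient R_i + (τε/(2 r_n)) · b_i ⊗ (−1, (−1)^i)ᵀ. -/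
set_option maxHeartbeats 2000000

open Real Matrix

/-- Counterclockwise rotation matrix by angle `θ`. -/
noncomputable def rot (θ : ℝ) : Matrix (Fin 2) (Fin 2) ℝ :=
  !![Real.cos θ, -Real.sin θ; Real.sin θ, Real.cos θ]

/-- Affine interpolation on the triangle with vertices `p1, p2, p3`, taking values
`v1, v2, v3` there, defined via barycentric coordinates. -/
noncomputable def interp (p1 p2 p3 v1 v2 v3 : Fin 2 → ℝ) : (Fin 2 → ℝ) → (Fin 2 → ℝ) :=
  fun x =>
    let P : Matrix (Fin 2) (Fin 2) ℝ :=
      !![p2 0 - p1 0, p3 0 - p1 0; p2 1 - p1 1, p3 1 - p1 1]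
    let y := P⁻¹.mulVec (x - p1)
    (1 - y 0 - y 1) • v1 + y 0 • v2 + y 1 • v3

lemma fderiv_affine (A : Matrix (Fin 2) (Fin 2) ℝ) (c : Fin 2 → ℝ) (x : Fin 2 → ℝ) :
    fderiv ℝ (fun x => A.mulVec x + c) x
      = (A.mulVecLin.toContinuousLinearMap : (Fin 2 → ℝ) →L[ℝ] (Fin 2 → ℝ)) :=
  ((A.mulVecLin.toContinuousLinearMap.hasFDerivAt).add_const c).fderiv

lemma interp_eq_affine (r τ ε : ℝ) (hr : 0 < r) (s θ : ℝ) (hs : s = 1 ∨ s = -1)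
    (b : Fin 2 → ℝ) (k : ℕ) :
    interp ![s * (r / 2), -(r / 2)] ![s * r, -r] ![s * r, r]
      ((rot θ).mulVec ![s * (r / 2), -(r / 2)] + (s * ((k : ℝ) + 1) * (τ * ε)) • b)
      ((rot θ).mulVec ![s * r, -r] + (s * ((k : ℝ) + 1) * (τ * ε)) • b)
      ((rot θ).mulVec ![s * r, r] + (s * (k : ℝ) * (τ * ε)) • b)
    = fun x => (rot θ + ((τ * ε) / (2 * r)) • vecMulVec b ![-1, -s]).mulVec x +
        ((rot θ).mulVec ![s * (r / 2), -(r / 2)] + (s * ((k : ℝ) + 1) * (τ * ε)) • b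
          - (rot θ + ((τ * ε) / (2 * r)) • vecMulVec b ![-1, -s]).mulVec
              ![s * (r / 2), -(r / 2)]) := by
  have hr' : r ≠ 0 := ne_of_gt hr
  funext x
  rcases hs with rfl | rfl
  · simp only [interp, Matrix.cons_val_zero, Matrix.cons_val_one, Matrix.head_cons]
    rw [show (!![1 * r - 1 * (r / 2), 1 * r - 1 * (r / 2); -r - -(r / 2), r - -(r / 2)])⁻¹
        = !![3 / (2 * r), -1 / (2 * r); 1 / (2 * r), 1 / (2 * r)] by
      apply Matrix.inv_eq_right_inv
      ext i j
      fin_cases i <;> fin_cases j <;>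
        simp [Matrix.mul_apply, Fin.sum_univ_two] <;> field_simp <;> ring]
    funext j
    fin_cases j <;>
      simp [Matrix.mulVec, dotProduct, Fin.sum_univ_two, rot, Matrix.vecMulVec_apply,
        Matrix.smul_apply, Pi.sub_apply, Matrix.add_apply, Matrix.vecHead, Matrix.vecTail,
        Pi.smul_apply, smul_eq_mul, Function.comp] <;>
      field_simp <;> ring
  · simp only [interp, Matrix.cons_val_zero, Matrix.cons_val_one, Matrix.head_cons]
    rw [show (!![-1 * r - -1 * (r / 2), -1 * r - -1 * (r / 2); -r - -(r / 2), r - -(r / 2)])⁻¹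
        = !![-3 / (2 * r), -1 / (2 * r); -1 / (2 * r), 1 / (2 * r)] by
      apply Matrix.inv_eq_right_inv
      ext i j
      fin_cases i <;> fin_cases j <;>
        simp [Matrix.mul_apply, Fin.sum_univ_two] <;> field_simp <;> ring]
    funext j
    fin_cases j <;>
      simp [Matrix.mulVec, dotProduct, Fin.sum_univ_two, rot, Matrix.vecMulVec_apply,
        Matrix.smul_apply, Pi.sub_apply, Matrix.add_apply, Matrix.vecHead, Matrix.vecTail,
        Pi.smul_apply, smul_eq_mul, Function.comp] <;>
      field_simp <;> ring

/-- The gradient on the region `Δ_{i,k}^{b,n}`.  Here `s = (-1)^{i+1}`, `r = r_n`,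
`r/2 = r_{n-1}`, `R = R_i` is a rotation, and the conclusion is
`∇I = R + (τε/(2 r_n)) bᵢ ⊗ (-1, (-1)^i)ᵀ = R + (τε/(2r)) b ⊗ (-1, -s)ᵀ`. -/
theorem stmt3 (r τ ε : ℝ) (hr : 0 < r) (hτε : 0 < τ * ε)
    (s : ℝ) (hs : s = 1 ∨ s = -1) (θ : ℝ) (b : Fin 2 → ℝ) (k : ℕ)
    (R : Matrix (Fin 2) (Fin 2) ℝ) (hR : R = rot θ)
    (p1 p2 p3 v1 v2 v3 : Fin 2 → ℝ)
    (hp1 : p1 = ![s * (r / 2), -(r / 2)])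
    (hp2 : p2 = ![s * r, -r])
    (hp3 : p3 = ![s * r, r])
    (hv1 : v1 = R.mulVec p1 + (s * ((k : ℝ) + 1) * (τ * ε)) • b)
    (hv2 : v2 = R.mulVec p2 + (s * ((k : ℝ) + 1) * (τ * ε)) • b)
    (hv3 : v3 = R.mulVec p3 + (s * (k : ℝ) * (τ * ε)) • b) :
    ∀ x u, fderiv ℝ (interp p1 p2 p3 v1 v2 v3) x u =
      (R + ((τ * ε) / (2 * r)) • vecMulVec b ![-1, -s]).mulVec u := by
  subst hp1 hp2 hp3 hv1 hv2 hv3 hR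
  intro x u
  rw [interp_eq_affine r τ ε hr s θ hs b k, fderiv_affine]
  simp [Matrix.mulVecLin_apply, Matrix.add_mulVec]
end

section
/- For any unit vectors b₁ = (cos φ, sin φ), b₂ = (cos η, sin η) in ℝ² with sin φ ≠ 0, sin η ≠ 0, and sin(φ−η) ≠ 0, there exist choices of signs σ₁, σ₂ ∈ {±1} and a possible swap of indices such that the new generators b₁' = σ₁ b_{π(1)}, b₂' = σ₂ b_{π(2)} (π a permutation of {1,2}) satisfy sin(φ'−η')/sin η' < 0 and sin(φ'−η')/sin φ' > 0, where φ', η' are the angles of b₁', b₂'. Moreover {b₁', b₂'} generates the same lattice span_{ℤ}{b₁,b₂}. -/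
/-!
Replacing `φ` by `φ + π` negates `b₁`, flips the sign of `sin (φ - η) / sin η` and leaves
`sin (φ - η) / sin φ` unchanged; replacing `η` by `η + π` negates `b₂` and acts the other way
round. So the two sign conditions can be fixed independently, one generator at a time, without
any swap, and negating generators does not change the lattice.
-/

open Real

theorem sin_add_pi_sub_div_sin (φ η : ℝ) :
    sin (φ + π - η) / sin η = -(sin (φ - η) / sin η) := by
  rw [add_sub_right_comm, sin_add_pi, neg_div]

theorem sin_add_pi_sub_div_sin_add_pi (φ η : ℝ) :
    sin (φ + π - η) / sin (φ + π) = sin (φ - η) / sin φ := by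
  rw [add_sub_right_comm, sin_add_pi, sin_add_pi, neg_div_neg_eq]

theorem sin_sub_add_pi_div_sin (φ η : ℝ) :
    sin (φ - (η + π)) / sin φ = -(sin (φ - η) / sin φ) := by
  rw [← sub_sub, sin_sub_pi, neg_div]

theorem sin_sub_add_pi_div_sin_add_pi (φ η : ℝ) :
    sin (φ - (η + π)) / sin (η + π) = sin (φ - η) / sin η := by
  rw [← sub_sub, sin_sub_pi, sin_add_pi, neg_div_neg_eq]

theorem exists_left_flip_sin_sub_div_sin_neg {φ η : ℝ} (h : sin (φ - η) / sin η ≠ 0) :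
    ∃ φ', (φ' = φ ∨ φ' = φ + π) ∧ sin (φ' - η) / sin η < 0 ∧
      sin (φ' - η) / sin φ' = sin (φ - η) / sin φ := by
  rcases h.lt_or_gt with hneg | hpos
  · exact ⟨φ, Or.inl rfl, hneg, rfl⟩
  · refine ⟨φ + π, Or.inr rfl, ?_, sin_add_pi_sub_div_sin_add_pi φ η⟩
    rw [sin_add_pi_sub_div_sin]
    exact neg_neg_of_pos hpos

theorem exists_right_flip_sin_sub_div_sin_pos {φ η : ℝ} (h : sin (φ - η) / sin φ ≠ 0) :
    ∃ η', (η' = η ∨ η' = η + π) ∧ 0 < sin (φ - η') / sin φ ∧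
      sin (φ - η') / sin η' = sin (φ - η) / sin η := by
  rcases h.lt_or_gt with hneg | hpos
  · refine ⟨η + π, Or.inr rfl, ?_, sin_sub_add_pi_div_sin_add_pi φ η⟩
    rw [sin_sub_add_pi_div_sin]
    exact neg_pos_of_neg hneg
  · exact ⟨η, Or.inl rfl, hpos, rfl⟩

theorem exists_sign_smul_of_eq_or_eq_add_pi {θ θ' : ℝ} (h : θ' = θ ∨ θ' = θ + π) :
    ∃ σ : ℝ, (σ = 1 ∨ σ = -1) ∧ ![cos θ', sin θ'] = σ • ![cos θ, sin θ] := by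
  rcases h with rfl | rfl
  · exact ⟨1, Or.inl rfl, (one_smul ℝ _).symm⟩
  · refine ⟨-1, Or.inr rfl, ?_⟩
    rw [cos_add_pi, sin_add_pi, neg_one_smul, Matrix.neg_cons, Matrix.neg_cons, Matrix.neg_empty]

theorem Submodule.span_int_singleton_sign_smul {R M : Type*} [Ring R] [AddCommGroup M]
    [Module R M] {σ : R} (hσ : σ = 1 ∨ σ = -1) (v : M) :
    span ℤ {σ • v} = span ℤ {v} := by
  rcases hσ with rfl | rfl
  · rw [one_smul]
  · rw [neg_one_smul, ← Set.neg_singleton, span_neg]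

theorem Submodule.span_int_pair_sign_smul {R M : Type*} [Ring R] [AddCommGroup M]
    [Module R M] {σ₁ σ₂ : R} (hσ₁ : σ₁ = 1 ∨ σ₁ = -1) (hσ₂ : σ₂ = 1 ∨ σ₂ = -1) (v w : M) :
    span ℤ {σ₁ • v, σ₂ • w} = span ℤ {v, w} := by
  rw [span_insert, span_insert, span_int_singleton_sign_smul hσ₁,
    span_int_singleton_sign_smul hσ₂]

/-- Up to swapping the two generators and changing their signs (operations which do not
change the generated lattice), the sign conditions needed for the grain boundary
construction can always be achieved. -/
theorem stmt7 (φ η : ℝ) (hφ : Real.sin φ ≠ 0) (hη : Real.sin η ≠ 0)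
    (hφη : Real.sin (φ - η) ≠ 0)
    (b1 b2 : Fin 2 → ℝ)
    (hb1 : b1 = ![Real.cos φ, Real.sin φ])
    (hb2 : b2 = ![Real.cos η, Real.sin η]) :
    ∃ (σ1 σ2 : ℝ) (swap : Bool) (φ' η' : ℝ),
      (σ1 = 1 ∨ σ1 = -1) ∧ (σ2 = 1 ∨ σ2 = -1) ∧
      ![Real.cos φ', Real.sin φ'] = σ1 • (if swap then b2 else b1) ∧
      ![Real.cos η', Real.sin η'] = σ2 • (if swap then b1 else b2) ∧
      Real.sin (φ' - η') / Real.sin η' < 0 ∧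
      0 < Real.sin (φ' - η') / Real.sin φ' ∧
      Submodule.span ℤ
          ({![Real.cos φ', Real.sin φ'], ![Real.cos η', Real.sin η']} : Set (Fin 2 → ℝ)) =
        Submodule.span ℤ ({b1, b2} : Set (Fin 2 → ℝ)) := by
  obtain ⟨φ', hφ', hneg, hφ'_div⟩ := exists_left_flip_sin_sub_div_sin_neg (div_ne_zero hφη hη)
  obtain ⟨η', hη', hpos, hη'_div⟩ :=
    exists_right_flip_sin_sub_div_sin_pos (hφ'_div ▸ div_ne_zero hφη hφ)
  obtain ⟨σ1, hσ1, hb1'⟩ := exists_sign_smul_of_eq_or_eq_add_pi hφ'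
  obtain ⟨σ2, hσ2, hb2'⟩ := exists_sign_smul_of_eq_or_eq_add_pi hη'
  subst hb1 hb2
  refine ⟨σ1, σ2, false, φ', η', hσ1, hσ2, hb1', hb2', hη'_div ▸ hneg, hpos, ?_⟩
  rw [hb1', hb2', Submodule.span_int_pair_sign_smul hσ1 hσ2]
end
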